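/- arXiv:math/0605158 — 2 statements merged into one kernel-verified Lean document; each statement's English description precedes it below -/
import Mathlib

section
/- Suppose k ≥ 20, k₁ ≤ 1, and j, j₁, j₂ ≥ 0. If f₁ is supported in {(ξ₁,τ₁) : |ξ₁| ∈ [2^{k₁-1},2^{k₁+1}], |τ₁| ≈ less than 2^{j₁+1}} and f₂ is supported in {(ξ₂,τ₂) : |ξ₂| ∈ [2^{k₂-1},2^{k₂+1}], |τ₂ - ω(ξ₂)| ≤ 2^{j₂+1}} with k₂ ∈ [k-2,k+2], then the convolution f₁ * f₂ restricted to the region {|ξ| ∈ [2^{k-1},2^{k+1}], |τ - ω(ξ)| ≈ 2^j} vanishes identically unless either max(j,j₁,j₂) ∈ [k+k₁-10, k+k₁+10], or max(j,j₁,j₂) ≥ k+k₁+10 and max(j,j₁,j₂) - med(j,j₁,j₂) ≤ 10. -/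
open MeasureTheory Set

noncomputable section

/-- The Benjamin–Ono dispersion symbol `ω(ξ) = -ξ|ξ|`. -/
def omegaBO (ξ : ℝ) : ℝ := -ξ * |ξ|

/-- The dyadic interval `Ĩ_j`: `[-2,2]` for `j = 0`, `{|τ| ∈ [2^{j-1}, 2^{j+1}]}` for `j ≥ 1`. -/
def ItildeBO (j : ℕ) : Set ℝ :=
  if j = 0 then Set.Icc (-2) 2 else {τ : ℝ | |τ| ∈ Set.Icc ((2:ℝ)^(j-1)) ((2:ℝ)^(j+1))}

/-- The dyadic region `D_{k,j}` for `k ≥ 1`. -/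
def DBO (k j : ℕ) : Set (ℝ × ℝ) :=
  {p : ℝ × ℝ | |p.1| ∈ Set.Icc ((2:ℝ)^(k-1)) ((2:ℝ)^(k+1)) ∧ p.2 - omegaBO p.1 ∈ ItildeBO j}

private lemma two_zpow_mono' {m n : ℤ} (h : m ≤ n) : (2:ℝ)^m ≤ 2^n :=
  zpow_le_zpow_right₀ one_le_two h

private lemma ItildeBO_abs_le {j : ℕ} {x : ℝ} (h : x ∈ ItildeBO j) : |x| ≤ (2:ℝ)^((j:ℤ)+1) := by
  unfold ItildeBO at h
  split_ifs at h with hj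
  · subst hj
    have := abs_le.2 ⟨h.1, h.2⟩
    calc |x| ≤ 2 := this
    _ ≤ (2:ℝ)^((0:ℤ)+1) := by norm_num
  · have h2 : |x| ≤ (2:ℝ)^(j+1) := h.2
    rwa [show ((j:ℤ)+1) = ((j+1 : ℕ) : ℤ) by push_cast; ring, zpow_natCast]

private lemma ItildeBO_abs_ge {j : ℕ} {x : ℝ} (hj : 1 ≤ j) (h : x ∈ ItildeBO j) :
    (2:ℝ)^((j:ℤ)-1) ≤ |x| := by
  unfold ItildeBO at h
  rw [if_neg (by omega)] at h
  have h1 : (2:ℝ)^(j-1) ≤ |x| := h.1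
  rwa [show ((j:ℤ)-1) = ((j-1 : ℕ) : ℤ) by omega, zpow_natCast]

private lemma tri1 (x y z : ℝ) : |x - y - z| ≤ |x| + |y| + |z| := by
  have h1 : |x - y| ≤ |x| + |y| := by
    rw [sub_eq_add_neg]
    exact (abs_add_le _ _).trans (by rw [abs_neg])
  have h2 : |x - y - z| ≤ |x - y| + |z| := by
    rw [sub_eq_add_neg (x - y)]
    exact (abs_add_le _ _).trans (by rw [abs_neg])
  linarith

private lemma finalB (Mz : ℤ) (big s1 s2 r : ℝ)
    (hbig : (2:ℝ)^(Mz-1) ≤ big)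
    (h : big ≤ r + s1 + s2)
    (hr : r ≤ (2:ℝ)^(Mz-6)) (h1 : s1 ≤ (2:ℝ)^(Mz-10)) (h2 : s2 ≤ (2:ℝ)^(Mz-10)) : False := by
  have a : (2:ℝ)^(Mz-10) ≤ 2^(Mz-6) := two_zpow_mono' (by omega)
  have b : (2:ℝ)^(Mz-4) = 2^(Mz-6) * 2^(2:ℤ) := by
    rw [← zpow_add₀ (two_ne_zero) (Mz-6) 2]; ring_nf
  have c : (2:ℝ)^(Mz-4) ≤ 2^(Mz-1) := two_zpow_mono' (by omega)
  have d : (2:ℝ)^(2:ℤ) = 4 := by norm_num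
  have e : (0:ℝ) < 2^(Mz-6) := zpow_pos two_pos _
  linarith

/-- The key arithmetic/geometric lemma: the claimed support restriction at the level of
frequency-modulation variables. -/
private lemma coreBO (k k₂ j j₁ j₂ : ℕ) (k₁ : ℤ)
    (hk : 20 ≤ k) (hk₁ : k₁ ≤ 1)
    (hk₂l : (k : ℤ) - 2 ≤ (k₂ : ℤ)) (hk₂u : (k₂ : ℤ) ≤ (k : ℤ) + 2)
    (hcond : ¬ ((((k : ℤ) + k₁ - 10 ≤ (max j (max j₁ j₂) : ℤ)) ∧
        ((max j (max j₁ j₂) : ℤ) ≤ (k : ℤ) + k₁ + 10)) ∨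
      (((k : ℤ) + k₁ + 10 ≤ (max j (max j₁ j₂) : ℤ)) ∧
        ((max j (max j₁ j₂) : ℤ) -
          ((j + j₁ + j₂ - max j (max j₁ j₂) - min j (min j₁ j₂) : ℕ) : ℤ) ≤ 10))))
    (ξ τ ξ₁ τ₁ : ℝ)
    (hξl : (2:ℝ)^((k:ℤ)-1) ≤ |ξ|) (hξu : |ξ| ≤ (2:ℝ)^((k:ℤ)+1))
    (hτ : τ - omegaBO ξ ∈ ItildeBO j)
    (hξ₁l : (2:ℝ)^(k₁-1) ≤ |ξ₁|) (hξ₁u : |ξ₁| ≤ (2:ℝ)^(k₁+1))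
    (hτ₁ : τ₁ ∈ ItildeBO j₁)
    (hηl : (2:ℝ)^((k₂:ℤ)-1) ≤ |ξ - ξ₁|) (hηu : |ξ - ξ₁| ≤ (2:ℝ)^((k₂:ℤ)+1))
    (hτ₂ : (τ - τ₁) - omegaBO (ξ - ξ₁) ∈ ItildeBO j₂) : False := by
  set K : ℤ := (k:ℤ) with hK
  set η : ℝ := ξ - ξ₁ with hη
  set A : ℝ := τ - omegaBO ξ with hA
  set B : ℝ := τ₁ with hB
  set C : ℝ := (τ - τ₁) - omegaBO η with hC
  set R : ℝ := omegaBO η - omegaBO ξ with hRdef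
  have hkey : R = A - B - C := by rw [hRdef, hA, hB, hC]; ring
  -- basic size facts
  have hξ8 : (8:ℝ) ≤ |ξ| := by
    calc (8:ℝ) = 2^(3:ℤ) := by norm_num
    _ ≤ 2^(K-1) := two_zpow_mono' (by omega)
    _ ≤ |ξ| := hξl
  have hη8 : (8:ℝ) ≤ |η| := by
    calc (8:ℝ) = 2^(3:ℤ) := by norm_num
    _ ≤ 2^((k₂:ℤ)-1) := two_zpow_mono' (by omega)
    _ ≤ |η| := hηl
  have hξ₁4 : |ξ₁| ≤ 4 := by
    calc |ξ₁| ≤ 2^(k₁+1) := hξ₁u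
    _ ≤ (2:ℝ)^(2:ℤ) := two_zpow_mono' (by omega)
    _ = 4 := by norm_num
  -- the resonance identity |R| = |ξ₁| (|ξ| + |η|)
  have hRabs : |R| = |ξ₁| * (|ξ| + |η|) := by
    have hξ₁a := le_abs_self ξ₁
    have hξ₁b := neg_abs_le ξ₁
    rcases le_or_gt 0 ξ with hs | hs
    · have hxa : |ξ| = ξ := abs_of_nonneg hs
      have hη0 : 0 < η := by rw [hη]; rw [hxa] at hξ8; linarith
      have hηa : |η| = η := abs_of_pos hη0
      rw [hRdef, omegaBO, omegaBO, hxa, hηa,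
        show -η * η - -ξ * ξ = ξ₁ * (ξ + η) by rw [hη]; ring, abs_mul,
        abs_of_pos (by rw [hxa] at hξ8; linarith : (0:ℝ) < ξ + η)]
    · have hxa : |ξ| = -ξ := abs_of_neg hs
      have hη0 : η < 0 := by rw [hη]; rw [hxa] at hξ8; linarith
      have hηa : |η| = -η := abs_of_neg hη0
      rw [hRdef, omegaBO, omegaBO, hxa, hηa,
        show -η * -η - -ξ * -ξ = ξ₁ * (-(ξ + η)) by rw [hη]; ring, abs_mul,
        abs_of_pos (by rw [hxa] at hξ8; linarith : (0:ℝ) < -(ξ + η))]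
      ring
  have hξ₁0 : (0:ℝ) ≤ |ξ₁| := abs_nonneg _
  have hsum0 : (0:ℝ) ≤ |ξ| + |η| := by linarith [abs_nonneg ξ, abs_nonneg η]
  -- bounds on |R|
  have hRlow : (2:ℝ)^(K + k₁ - 2) ≤ |R| := by
    rw [hRabs]
    calc (2:ℝ)^(K + k₁ - 2) = 2^(k₁-1) * 2^(K-1) := by
          rw [← zpow_add₀ (two_ne_zero : (2:ℝ) ≠ 0)]; ring_nf
    _ ≤ |ξ₁| * (|ξ| + |η|) := by
        apply mul_le_mul hξ₁l (by linarith [abs_nonneg η]) (le_of_lt (zpow_pos two_pos _)) hξ₁0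
  have hRhigh : |R| ≤ (2:ℝ)^(K + k₁ + 5) := by
    rw [hRabs]
    have h1 : |ξ| + |η| ≤ (2:ℝ)^(K+4) := by
      have a1 : |ξ| ≤ (2:ℝ)^(K+3) := hξu.trans (two_zpow_mono' (by omega))
      have a2 : |η| ≤ (2:ℝ)^(K+3) := hηu.trans (two_zpow_mono' (by omega))
      have a3 : (2:ℝ)^(K+4) = 2^(K+3) * 2 := by
        rw [show K+4 = (K+3)+1 by ring, zpow_add_one₀ (two_ne_zero : (2:ℝ) ≠ 0)]
      linarith
    calc |ξ₁| * (|ξ| + |η|) ≤ 2^(k₁+1) * 2^(K+4) :=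
          mul_le_mul hξ₁u h1 hsum0 (le_of_lt (zpow_pos two_pos _))
    _ = 2^(K + k₁ + 5) := by rw [← zpow_add₀ (two_ne_zero : (2:ℝ) ≠ 0)]; ring_nf
  -- modulation bounds
  have hAu : |A| ≤ (2:ℝ)^((j:ℤ)+1) := ItildeBO_abs_le hτ
  have hBu : |B| ≤ (2:ℝ)^((j₁:ℤ)+1) := ItildeBO_abs_le hτ₁
  have hCu : |C| ≤ (2:ℝ)^((j₂:ℤ)+1) := ItildeBO_abs_le hτ₂
  -- triangle inequalities
  have tR : |R| ≤ |A| + |B| + |C| := by rw [hkey]; exact tri1 A B C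
  have tA : |A| ≤ |R| + |B| + |C| := by
    have := tri1 R (-B) (-C)
    rw [abs_neg, abs_neg] at this
    rw [show A = R - -B - -C by rw [hkey]; ring]
    exact this
  have tB : |B| ≤ |A| + |R| + |C| := by
    have := tri1 A R C
    rw [show B = A - R - C by rw [hkey]; ring]
    exact this
  have tC : |C| ≤ |A| + |B| + |R| := by
    have := tri1 A B R
    rw [show C = A - B - R by rw [hkey]; ring]
    exact this
  rw [show (max (j:ℤ) (max (j₁:ℤ) (j₂:ℤ))) = ((max j (max j₁ j₂) : ℕ) : ℤ) by
    push_cast; rfl] at hcond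
  have hc1 := fun h => hcond (Or.inl h)
  have hc2 := fun h => hcond (Or.inr h)
  set M : ℕ := max j (max j₁ j₂) with hM
  set m : ℕ := min j (min j₁ j₂) with hm
  set med : ℕ := j + j₁ + j₂ - M - m with hmed
  rcases lt_or_ge (M:ℤ) (K + k₁ - 10) with hcase | hcase
  · -- Case A : all modulations small, contradiction with lower bound on |R|
    have bA : |A| ≤ (2:ℝ)^(K+k₁-10) := hAu.trans (two_zpow_mono' (by omega))
    have bB : |B| ≤ (2:ℝ)^(K+k₁-10) := hBu.trans (two_zpow_mono' (by omega))
    have bC : |C| ≤ (2:ℝ)^(K+k₁-10) := hCu.trans (two_zpow_mono' (by omega))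
    have e1 : (2:ℝ)^(K+k₁-2) = 2^(K+k₁-10) * 2^(8:ℤ) := by
      rw [← zpow_add₀ (two_ne_zero : (2:ℝ) ≠ 0)]; ring_nf
    have e2 : (2:ℝ)^(8:ℤ) = 256 := by norm_num
    have e3 : (0:ℝ) < 2^(K+k₁-10) := zpow_pos two_pos _
    linarith
  · -- Case B : the maximum is big and dominates
    have hMbig : (K : ℤ) + k₁ + 10 < (M:ℤ) := by
      by_contra h
      exact hc1 ⟨hcase, le_of_not_gt h⟩
    have hmedsmall : (10:ℤ) < (M:ℤ) - (med:ℤ) := by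
      by_contra h
      exact hc2 ⟨le_of_lt hMbig, le_of_not_gt h⟩
    have hmedM : (med:ℤ) + 11 ≤ (M:ℤ) := by omega
    have hM11 : 11 ≤ M := by
      have : (0:ℤ) ≤ (med:ℤ) := Int.natCast_nonneg _
      omega
    have hRM : |R| ≤ (2:ℝ)^((M:ℤ)-6) := hRhigh.trans (two_zpow_mono' (by omega))
    have hor : M = j ∨ M = j₁ ∨ M = j₂ := by omega
    rcases hor with hMe | hMe | hMe
    · have hj1 : j₁ ≤ med := by omega
      have hj2 : j₂ ≤ med := by omega
      have hbig : (2:ℝ)^((M:ℤ)-1) ≤ |A| := by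
        have := ItildeBO_abs_ge (show 1 ≤ j by omega) hτ
        rwa [show ((j:ℤ)-1) = (M:ℤ)-1 by omega] at this
      exact finalB (M:ℤ) |A| |B| |C| |R| hbig tA hRM
        (hBu.trans (two_zpow_mono' (by omega))) (hCu.trans (two_zpow_mono' (by omega)))
    · have hj1 : j ≤ med := by omega
      have hj2 : j₂ ≤ med := by omega
      have hbig : (2:ℝ)^((M:ℤ)-1) ≤ |B| := by
        have := ItildeBO_abs_ge (show 1 ≤ j₁ by omega) hτ₁
        rwa [show ((j₁:ℤ)-1) = (M:ℤ)-1 by omega] at this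
      have tB' : |B| ≤ |R| + |A| + |C| := by linarith
      exact finalB (M:ℤ) |B| |A| |C| |R| hbig tB' hRM
        (hAu.trans (two_zpow_mono' (by omega))) (hCu.trans (two_zpow_mono' (by omega)))
    · have hj1 : j ≤ med := by omega
      have hj2 : j₁ ≤ med := by omega
      have hbig : (2:ℝ)^((M:ℤ)-1) ≤ |C| := by
        have := ItildeBO_abs_ge (show 1 ≤ j₂ by omega) hτ₂
        rwa [show ((j₂:ℤ)-1) = (M:ℤ)-1 by omega] at this
      have tC' : |C| ≤ |R| + |A| + |B| := by linarith
      exact finalB (M:ℤ) |C| |A| |B| |R| hbig tC' hRM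
        (hAu.trans (two_zpow_mono' (by omega))) (hBu.trans (two_zpow_mono' (by omega)))

theorem support_restriction
    (k k₂ j j₁ j₂ : ℕ) (k₁ : ℤ)
    (hk : 20 ≤ k) (hk₁ : k₁ ≤ 1)
    (hk₂l : (k : ℤ) - 2 ≤ (k₂ : ℤ)) (hk₂u : (k₂ : ℤ) ≤ (k : ℤ) + 2)
    (f₁ f₂ : ℝ × ℝ → ℂ)
    (hf₁ : Function.support f₁ ⊆
      {p : ℝ × ℝ | |p.1| ∈ Set.Icc ((2:ℝ)^(k₁-1)) ((2:ℝ)^(k₁+1)) ∧ p.2 ∈ ItildeBO j₁})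
    (hf₂ : Function.support f₂ ⊆
      {p : ℝ × ℝ | |p.1| ∈ Set.Icc ((2:ℝ)^(k₂-1)) ((2:ℝ)^(k₂+1)) ∧
        p.2 - omegaBO p.1 ∈ ItildeBO j₂})
    (hcond : ¬ ((((k : ℤ) + k₁ - 10 ≤ (max j (max j₁ j₂) : ℤ)) ∧
        ((max j (max j₁ j₂) : ℤ) ≤ (k : ℤ) + k₁ + 10)) ∨
      (((k : ℤ) + k₁ + 10 ≤ (max j (max j₁ j₂) : ℤ)) ∧
        ((max j (max j₁ j₂) : ℤ) -
          ((j + j₁ + j₂ - max j (max j₁ j₂) - min j (min j₁ j₂) : ℕ) : ℤ) ≤ 10)))) :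
    ∀ p ∈ DBO k j, (∫ q : ℝ × ℝ, f₁ q * f₂ (p - q)) = 0 := by
  intro p hp
  obtain ⟨hpξ, hpτ⟩ := hp
  have hzero : ∀ q : ℝ × ℝ, f₁ q * f₂ (p - q) = 0 := by
    intro q
    by_contra hne
    have hq1 : f₁ q ≠ 0 := fun h => hne (by rw [h, zero_mul])
    have hq2 : f₂ (p - q) ≠ 0 := fun h => hne (by rw [h, mul_zero])
    obtain ⟨hqξ, hqτ⟩ := hf₁ (Function.mem_support.2 hq1)
    obtain ⟨hrξ, hrτ⟩ := hf₂ (Function.mem_support.2 hq2)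
    rw [Prod.fst_sub] at hrξ
    rw [Prod.snd_sub, Prod.fst_sub] at hrτ
    -- convert ℕ-exponents to ℤ-exponents
    have cast1 : (2:ℝ)^(k-1) = (2:ℝ)^((k:ℤ)-1) := by
      rw [show ((k:ℤ)-1) = ((k-1 : ℕ) : ℤ) by omega, zpow_natCast]
    have cast2 : (2:ℝ)^(k+1) = (2:ℝ)^((k:ℤ)+1) := by
      rw [show ((k:ℤ)+1) = ((k+1 : ℕ) : ℤ) by omega, zpow_natCast]
    have cast3 : (2:ℝ)^(k₂-1) = (2:ℝ)^((k₂:ℤ)-1) := by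
      rw [show ((k₂:ℤ)-1) = ((k₂-1 : ℕ) : ℤ) by omega, zpow_natCast]
    have cast4 : (2:ℝ)^(k₂+1) = (2:ℝ)^((k₂:ℤ)+1) := by
      rw [show ((k₂:ℤ)+1) = ((k₂+1 : ℕ) : ℤ) by omega, zpow_natCast]
    exact coreBO k k₂ j j₁ j₂ k₁ hk hk₁ hk₂l hk₂u hcond p.1 p.2 q.1 q.2
      (cast1 ▸ hpξ.1) (cast2 ▸ hpξ.2) hpτ hqξ.1 hqξ.2 hqτ
      (cast3 ▸ hrξ.1) (cast4 ▸ hrξ.2) hrτ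
  simp only [hzero, integral_zero]

end
end

section
/- Let O(ξ,τ) = ψ((ξ-2^k)/4)ψ((τ-ω(ξ))/2^{10}) and P(ξ,τ) = ψ((ξ+2^k)/4)ψ((τ-ω(ξ))/2^{10}) with ψ a standard smooth bump and ω(ξ) = -ξ|ξ|. Then for k large, |(O*P)(ξ,τ)| ≥ C⁻¹ whenever |ξ| ∈ [5/8, 8/5] (say ξ near 1) and |τ + 2^{k+1}ξ| ≤ 1. -/
open MeasureTheory Set

noncomputable section

theorem high_high_to_low_convolution_lower_bound
    (ψ : ℝ → ℝ)
    (hrange : ∀ x, ψ x ∈ Set.Icc (0:ℝ) 1)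
    (hsmooth : ContDiff ℝ (⊤ : ℕ∞) ψ)
    (heven : ∀ x, ψ (-x) = ψ x)
    (hsupp : Function.support ψ ⊆ Set.Icc (-8/5 : ℝ) (8/5))
    (hone : ∀ x ∈ Set.Icc (-5/4 : ℝ) (5/4), ψ x = 1) :
    ∃ C : ℝ, 0 < C ∧ ∃ K : ℕ, ∀ k : ℕ, K ≤ k → ∀ ξ τ : ℝ,
      |ξ| ∈ Set.Icc (5/8 : ℝ) (8/5) → |τ + (2:ℝ)^(k+1) * ξ| ≤ 1 →
      C⁻¹ ≤ |∫ q : ℝ × ℝ,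
        (ψ ((q.1 - (2:ℝ)^k)/4) * ψ ((q.2 - omegaBO q.1)/2^10)) *
          (ψ (((ξ - q.1) + (2:ℝ)^k)/4) * ψ (((τ - q.2) - omegaBO (ξ - q.1))/2^10))| := by
  refine ⟨1200, by norm_num, 10, fun k hk ξ τ hξ hτ => ?_⟩
  have hψc : Continuous ψ := hsmooth.continuous
  have hψnn : ∀ x, 0 ≤ ψ x := fun x => (hrange x).1
  have hψ1 : ∀ x : ℝ, |x| ≤ 5/4 → ψ x = 1 := fun x hx => hone x (Set.mem_Icc.mpr ⟨by linarith [(abs_le.mp hx).1], (abs_le.mp hx).2⟩)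
  have hψ0 : ∀ x : ℝ, ψ x ≠ 0 → |x| ≤ 8/5 := fun x hx => by
    have h := hsupp (Function.mem_support.mpr hx)
    rw [Set.mem_Icc] at h
    rw [abs_le]; constructor <;> linarith [h.1, h.2]
  have hco : Continuous omegaBO := by
    have : omegaBO = fun ξ : ℝ => -ξ * |ξ| := rfl
    rw [this]; exact (continuous_id.neg).mul continuous_abs
  set P : ℝ := (2:ℝ)^k with hPdef
  have hP0 : (1024:ℝ) ≤ P := by
    rw [hPdef]
    calc (1024:ℝ) = 2^(10:ℕ) := by norm_num
    _ ≤ 2^k := pow_le_pow_right₀ (by norm_num) hk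
  have hP2 : (2:ℝ)^(k+1) = 2 * P := by rw [hPdef, pow_succ]; ring
  rw [hP2] at hτ
  have hξ8 : |ξ| ≤ 8/5 := hξ.2
  rw [abs_le] at hξ8 hτ
  set f : ℝ × ℝ → ℝ := fun q =>
    (ψ ((q.1 - P)/4) * ψ ((q.2 - omegaBO q.1)/2^10)) *
      (ψ (((ξ - q.1) + P)/4) * ψ (((τ - q.2) - omegaBO (ξ - q.1))/2^10)) with hfdef
  have hfnn : ∀ q, 0 ≤ f q := fun q =>
    mul_nonneg (mul_nonneg (hψnn _) (hψnn _)) (mul_nonneg (hψnn _) (hψnn _))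
  have hfc : Continuous f := by
    apply Continuous.mul
    · exact (hψc.comp ((continuous_fst.sub continuous_const).div_const 4)).mul
        (hψc.comp ((continuous_snd.sub (hco.comp continuous_fst)).div_const _))
    · exact (hψc.comp (((continuous_const.sub continuous_fst).add continuous_const).div_const 4)).mul
        (hψc.comp (((continuous_const.sub continuous_snd).sub
          (hco.comp ((continuous_const.sub continuous_fst)))).div_const _))
  -- support bounds
  set B : ℝ := (P + 7)^2 + |τ| + 2048 with hBdef
  have hbound : ∀ q : ℝ × ℝ, f q ≠ 0 → |q.1| ≤ P + 7 ∧ |q.2| ≤ B := by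
    intro q hq
    have h1 : ψ ((q.1 - P)/4) ≠ 0 := fun h => hq (by rw [hfdef]; simp [h])
    have h2 : ψ ((q.2 - omegaBO q.1)/2^10) ≠ 0 := fun h => hq (by rw [hfdef]; simp [h])
    have b1 := hψ0 _ h1
    have b2 := hψ0 _ h2
    rw [abs_div, abs_of_pos (by norm_num : (0:ℝ) < 4)] at b1
    rw [abs_div, abs_of_pos (by positivity : (0:ℝ) < (2:ℝ)^10)] at b2
    have hq1 : |q.1| ≤ P + 7 := by
      have := abs_sub_abs_le_abs_sub q.1 P
      rw [abs_of_pos (by linarith : (0:ℝ) < P)] at this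
      linarith
    refine ⟨hq1, ?_⟩
    have hω : |omegaBO q.1| ≤ (P + 7)^2 := by
      have : |omegaBO q.1| = |q.1| * |q.1| := by
        rw [omegaBO, abs_mul, abs_neg, abs_abs]
      rw [this, sq]
      exact mul_le_mul hq1 hq1 (abs_nonneg _) (by linarith)
    have := abs_sub_abs_le_abs_sub q.2 (omegaBO q.1)
    have h210 : ((2:ℝ)^10) = 1024 := by norm_num
    rw [h210] at b2
    rw [hBdef]
    have : |q.2| ≤ |omegaBO q.1| + 1024 * (8/5) := by
      nlinarith [abs_nonneg (q.2 - omegaBO q.1)]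
    nlinarith [abs_nonneg τ]
  have hcs : HasCompactSupport f := by
    apply HasCompactSupport.intro (K := Set.Icc (-(P+7)) (P+7) ×ˢ Set.Icc (-B) B)
      (isCompact_Icc.prod isCompact_Icc)
    intro q hq
    by_contra hfq
    obtain ⟨a1, a2⟩ := hbound q hfq
    rw [abs_le] at a1 a2
    exact hq ⟨⟨a1.1, a1.2⟩, ⟨a2.1, a2.2⟩⟩
  have hint : Integrable f := hfc.integrable_of_hasCompactSupport hcs
  -- the pointwise = 1 lemma
  have hone4 : ∀ x ∈ Set.Icc (P - 3) (P + 3),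
      ∀ y ∈ Set.Icc (omegaBO x - 100) (omegaBO x + 100), f (x, y) = 1 := by
    intro x hx y hy
    rw [Set.mem_Icc] at hx hy
    have hxpos : 0 < x := by linarith
    have hωx : omegaBO x = -x^2 := by
      rw [omegaBO, abs_of_pos hxpos]; ring
    rw [hωx] at hy
    have hneg : ξ - x < 0 := by linarith
    have hωξx : omegaBO (ξ - x) = (x - ξ)^2 := by
      rw [omegaBO, abs_of_neg hneg]; ring
    rw [hfdef]
    simp only
    rw [hωx, hωξx]
    rw [hψ1 _ (by rw [abs_le]; constructor <;> [linarith; linarith]),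
        hψ1 _ (by rw [abs_le]; norm_num; constructor <;> linarith),
        hψ1 _ (by rw [abs_le]; constructor <;> [linarith; linarith]),
        hψ1 _ (by rw [abs_le]; norm_num; constructor <;> nlinarith)]
    norm_num
  -- main estimate
  have key : (1200:ℝ) ≤ ∫ q : ℝ × ℝ, f q := by
    have hint' : Integrable f (volume.prod volume) := by
      rwa [← Measure.volume_eq_prod]
    rw [Measure.volume_eq_prod, integral_prod f hint']
    set F : ℝ → ℝ := fun x => ∫ y, f (x, y) with hFdef
    have hFnn : ∀ x, 0 ≤ F x := fun x => integral_nonneg (fun y => hfnn _)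
    have hFint : Integrable F := hint'.integral_prod_left
    have h1 : ∫ x in Set.Icc (P-3) (P+3), F x ≤ ∫ x, F x :=
      setIntegral_le_integral hFint (Filter.Eventually.of_forall hFnn)
    have h2 : (200:ℝ) * (volume (Set.Icc (P-3) (P+3))).toReal
        ≤ ∫ x in Set.Icc (P-3) (P+3), F x := by
      apply setIntegral_ge_of_const_le_real measurableSet_Icc
        (by rw [Real.volume_Icc]; exact ENNReal.ofReal_ne_top)
      · intro x hx
        have hinty : Integrable (fun y => f (x, y)) := by
          apply Continuous.integrable_of_hasCompactSupport
          · exact hfc.comp (Continuous.prodMk_right x)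
          · apply HasCompactSupport.intro (K := Set.Icc (-B) B) isCompact_Icc
            intro y hy
            by_contra hfy
            exact hy (abs_le.mp (hbound (x, y) hfy).2)
        have h3 : ∫ y in Set.Icc (omegaBO x - 100) (omegaBO x + 100), f (x, y)
            ≤ ∫ y, f (x, y) :=
          setIntegral_le_integral hinty (Filter.Eventually.of_forall fun y => hfnn _)
        have h4 : ∫ y in Set.Icc (omegaBO x - 100) (omegaBO x + 100), f (x, y) = 200 := by
          rw [setIntegral_congr_fun measurableSet_Icc
            (fun y hy => hone4 x hx y hy)]
          simp [Real.volume_Icc]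
          norm_num
        rw [hFdef]
        simp only
        linarith
      · exact hFint.integrableOn
    have hvol : (volume (Set.Icc (P-3) (P+3))).toReal = 6 := by
      rw [Real.volume_Icc]
      rw [ENNReal.toReal_ofReal (by linarith)]
      ring
    rw [hvol] at h2
    linarith
  have hnn : 0 ≤ ∫ q : ℝ × ℝ, f q := integral_nonneg hfnn
  rw [hfdef] at key hnn
  simp only at key hnn ⊢
  rw [abs_of_nonneg hnn]
  calc (1200:ℝ)⁻¹ ≤ 1200 := by norm_num
  _ ≤ _ := key

end
end
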